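/- For κ ∈ (−1, 1] and n ≥ 1, the coefficient r_n of z^n in (1/2)(√(1+4κ²z/(1−z)²) − 1) satisfies r_n = κ·∫_0^κ P_{n−1}^{(1,0)}(1 − 2s²) ds, where P_{n−1}^{(1,0)} is the Jacobi polynomial of degree n−1 with parameters (1,0). -/

import Mathlib

/-!
Put `u = -κ² z / (1 - z)²`. Then the function is `(√(1 - 4u) - 1) / 2 = -∑ Cⱼ u^(j+1)`, the
Catalan generating function, and expanding every `(1 - z)^(-(2j+2))` binomially gives
`r_n = ∑_{j+m=n-1} (-1)ʲ Cⱼ κ^(2j+2) (2j+1+m choose 2j+1)`. Integrating the hypergeometric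
sum of `P_{n-1}^{(1,0)}(1 - 2s²)` term by term gives the same finite sum, because
`(m+1) (-m)ₖ (m+2)ₖ / ((2)ₖ k! (2k+1)) = (-1)ᵏ Cₖ (m+k+1 choose 2k+1)`.

For small `u` the Catalan series is identified with the principal square root because both are
roots of `X² - X + u` of norm at most `2‖u‖`, and this quadratic has only one such root.
-/

open Complex Finset

/-- The Jacobi polynomial `P_m^{(1,0)}` evaluated at `1 - 2 x`, via the hypergeometric
representation `P_m^{(1,0)}(1-2x) = (m+1) · ₂F₁(-m, m+2; 2; x)`. -/
noncomputable def jacobiP10 (m : ℕ) (x : ℝ) : ℝ :=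
  (m + 1) * ∑ k ∈ Finset.range (m + 1),
    ((ascPochhammer ℝ k).eval (-(m : ℝ)) * (ascPochhammer ℝ k).eval ((m : ℝ) + 2) /
      ((ascPochhammer ℝ k).eval 2 * (Nat.factorial k : ℝ))) * x ^ k

open scoped NNReal Nat

theorem catalan_le_four_pow (n : ℕ) : catalan n ≤ 4 ^ n :=
  (Nat.le_mul_of_pos_left _ n.succ_pos).trans
    ((succ_mul_catalan_eq_centralBinom n).trans_le (Nat.centralBinom_le_four_pow n))

theorem catalan_mul_factorial_mul_factorial (k : ℕ) :
    catalan k * ((k + 1)! * k ! * (2 * k + 1)) = (2 * k + 1)! := by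
  have hcentral : k.centralBinom * (k ! * k !) = (2 * k)! := by
    have := Nat.choose_mul_factorial_mul_factorial (show k ≤ 2 * k by omega)
    rwa [show 2 * k - k = k by omega, mul_assoc, ← Nat.centralBinom_eq_two_mul_choose] at this
  rw [Nat.factorial_succ (2 * k), ← hcentral, ← succ_mul_catalan_eq_centralBinom,
    Nat.factorial_succ k]
  ring

theorem Nat.succ_mul_descFactorial_mul_ascFactorial (m k : ℕ) :
    (m + 1) * m.descFactorial k * (m + 2).ascFactorial k
      = (m + k + 1).descFactorial (2 * k + 1) := by
  have := Nat.descFactorial_mul_descFactorial (n := m + k + 1) (show k ≤ 2 * k + 1 by omega)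
  rw [show m + k + 1 - k = m + 1 by omega, show 2 * k + 1 - k = k + 1 by omega,
    Nat.succ_descFactorial_succ, show m + k + 1 = m + 1 + k by omega,
    Nat.add_descFactorial_eq_ascFactorial] at this
  rw [show m + k + 1 = m + 1 + k by omega, ← this]

theorem jacobiP10_coeff_div_eq_catalan_mul_choose (m k : ℕ) :
    ((m : ℝ) + 1) * ((ascPochhammer ℝ k).eval (-(m : ℝ)) *
      (ascPochhammer ℝ k).eval ((m : ℝ) + 2) / ((ascPochhammer ℝ k).eval 2 * (k ! : ℝ))) /
        (2 * k + 1)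
    = (-1) ^ k * catalan k * ((m + k + 1).choose (2 * k + 1) : ℝ) := by
  have hneg : (ascPochhammer ℝ k).eval (-(m : ℝ)) = (-1) ^ k * (m.descFactorial k : ℝ) := by
    rw [ascPochhammer_eval_neg_eq_descPochhammer, descPochhammer_eval_eq_descFactorial]
  have hasc : (ascPochhammer ℝ k).eval ((m : ℝ) + 2) = ((m + 2).ascFactorial k : ℝ) := by
    exact_mod_cast ascPochhammer_nat_eq_natCast_ascFactorial ℝ (m + 2) k
  have htwo : (ascPochhammer ℝ k).eval 2 = ((k + 1)! : ℝ) := by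
    have := Nat.factorial_mul_ascFactorial 1 k
    rw [Nat.factorial_one, one_mul, add_comm 1 k] at this
    rw [← this]
    exact_mod_cast ascPochhammer_nat_eq_natCast_ascFactorial ℝ 2 k
  have key : (m + 1) * m.descFactorial k * (m + 2).ascFactorial k
      = catalan k * (m + k + 1).choose (2 * k + 1) * ((k + 1)! * k ! * (2 * k + 1)) := by
    rw [Nat.succ_mul_descFactorial_mul_ascFactorial, Nat.descFactorial_eq_factorial_mul_choose,
      ← catalan_mul_factorial_mul_factorial]
    ring
  rw [hneg, hasc, htwo]
  field_simp
  exact_mod_cast key.trans (by ring)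

theorem mul_integral_jacobiP10_sq (m : ℕ) (κ : ℝ) :
    κ * ∫ s in (0 : ℝ)..κ, jacobiP10 m (s ^ 2)
      = ∑ k ∈ range (m + 1), (-1) ^ k * catalan k * ((m + k + 1).choose (2 * k + 1) : ℝ)
          * κ ^ (2 * k + 2) := by
  simp only [jacobiP10, ← pow_mul]
  rw [intervalIntegral.integral_const_mul, intervalIntegral.integral_finsetSum, mul_sum, mul_sum]
  · refine sum_congr rfl fun k _ => ?_
    rw [intervalIntegral.integral_const_mul, integral_pow,
      ← jacobiP10_coeff_div_eq_catalan_mul_choose]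
    push_cast
    field_simp
    ring
  · exact fun k _ => (continuous_const.mul (continuous_pow _)).intervalIntegrable _ _

theorem Complex.re_cpow_one_div_two_nonneg (w : ℂ) : 0 ≤ (w ^ (1 / 2 : ℂ)).re := by
  rcases eq_or_ne w 0 with rfl | hw
  · simp
  rw [cpow_def_of_ne_zero hw, exp_re]
  refine mul_nonneg (Real.exp_pos _).le (Real.cos_nonneg_of_mem_Icc ?_)
  have him : (log w * (1 / 2)).im = w.arg / 2 := by simp [log_im, div_eq_mul_inv]
  rw [him]
  constructor <;> linarith [neg_pi_lt_arg w, arg_le_pi w]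

theorem Complex.cpow_one_div_two_mul_self (w : ℂ) :
    w ^ (1 / 2 : ℂ) * w ^ (1 / 2 : ℂ) = w := by
  rw [← sq, one_div]
  exact_mod_cast cpow_nat_inv_pow w two_ne_zero

theorem Complex.norm_cpow_one_div_two_sub_one_le (w : ℂ) :
    ‖w ^ (1 / 2 : ℂ) - 1‖ ≤ ‖w - 1‖ := by
  have hplus : 1 ≤ ‖w ^ (1 / 2 : ℂ) + 1‖ := by
    calc (1 : ℝ) ≤ (w ^ (1 / 2 : ℂ) + 1).re := by
          rw [add_re, one_re]; linarith [re_cpow_one_div_two_nonneg w]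
      _ ≤ _ := re_le_norm _
  calc ‖w ^ (1 / 2 : ℂ) - 1‖ ≤ ‖w ^ (1 / 2 : ℂ) - 1‖ * ‖w ^ (1 / 2 : ℂ) + 1‖ :=
        le_mul_of_one_le_right (norm_nonneg _) hplus
    _ = ‖w - 1‖ := by
        rw [← norm_mul]
        congr 1
        linear_combination cpow_one_div_two_mul_self w

theorem eq_of_sq_sub_self_eq_of_norm_add_lt_one {𝕜 : Type*} [NormedField 𝕜] {S T : 𝕜}
    (h : S ^ 2 - S = T ^ 2 - T) (hST : ‖S‖ + ‖T‖ < 1) : S = T := by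
  have hne : S + T - 1 ≠ 0 := by
    intro h0
    have : ‖(1 : 𝕜)‖ ≤ ‖S‖ + ‖T‖ := by
      rw [show (1 : 𝕜) = S + T by linear_combination -h0]
      exact norm_add_le S T
    rw [norm_one] at this
    linarith
  have hprod : (S - T) * (S + T - 1) = 0 := by linear_combination h
  exact sub_eq_zero.1 ((mul_eq_zero.1 hprod).resolve_right hne)

section CatalanGeneratingFunction

variable {u : ℂ}

theorem norm_catalan_mul_pow_succ_le (hu : ‖u‖ ≤ 1 / 8) (j : ℕ) :
    ‖(catalan j : ℂ) * u ^ (j + 1)‖ ≤ ‖u‖ * (1 / 2) ^ j := by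
  have hcat : (catalan j : ℝ) ≤ 4 ^ j := mod_cast catalan_le_four_pow j
  rw [norm_mul, norm_pow, Complex.norm_natCast]
  calc (catalan j : ℝ) * ‖u‖ ^ (j + 1) ≤ 4 ^ j * ‖u‖ ^ (j + 1) := by gcongr
    _ = ‖u‖ * (4 * ‖u‖) ^ j := by ring
    _ ≤ ‖u‖ * (1 / 2) ^ j := by gcongr; linarith

theorem summable_norm_catalan_mul_pow_succ (hu : ‖u‖ ≤ 1 / 8) :
    Summable fun j => ‖(catalan j : ℂ) * u ^ (j + 1)‖ :=
  .of_nonneg_of_le (fun _ => norm_nonneg _) (norm_catalan_mul_pow_succ_le hu)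
    (summable_geometric_two.mul_left _)

theorem norm_tsum_catalan_mul_pow_succ_le (hu : ‖u‖ ≤ 1 / 8) :
    ‖∑' j, (catalan j : ℂ) * u ^ (j + 1)‖ ≤ 2 * ‖u‖ := by
  have hs := summable_norm_catalan_mul_pow_succ hu
  calc ‖∑' j, (catalan j : ℂ) * u ^ (j + 1)‖
      ≤ ∑' j, ‖(catalan j : ℂ) * u ^ (j + 1)‖ := norm_tsum_le_tsum_norm hs
    _ ≤ ∑' j : ℕ, ‖u‖ * (1 / 2) ^ j :=
        hs.tsum_le_tsum (norm_catalan_mul_pow_succ_le hu) (summable_geometric_two.mul_left _)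
    _ = 2 * ‖u‖ := by rw [tsum_mul_left, tsum_geometric_two, mul_comm]

theorem tsum_catalan_mul_pow_succ_sq (hu : ‖u‖ ≤ 1 / 8) :
    (∑' j, (catalan j : ℂ) * u ^ (j + 1)) ^ 2
      = (∑' j, (catalan j : ℂ) * u ^ (j + 1)) - u := by
  have hs := summable_norm_catalan_mul_pow_succ hu
  have hconv : ∀ n, ∑ kl ∈ antidiagonal n,
      (catalan kl.1 : ℂ) * u ^ (kl.1 + 1) * ((catalan kl.2 : ℂ) * u ^ (kl.2 + 1))
        = catalan (n + 1) * u ^ (n + 1 + 1) := by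
    intro n
    rw [catalan_succ', Nat.cast_sum, sum_mul]
    refine sum_congr rfl fun kl hkl => ?_
    rw [← mem_antidiagonal.1 hkl]
    push_cast
    ring
  rw [sq, tsum_mul_tsum_eq_tsum_sum_antidiagonal_of_summable_norm hs hs, tsum_congr hconv,
    hs.of_norm.tsum_eq_zero_add]
  simp

theorem hasSum_catalan_mul_pow_succ (hu : ‖u‖ ≤ 1 / 8) :
    HasSum (fun j => (catalan j : ℂ) * u ^ (j + 1)) ((1 - (1 - 4 * u) ^ (1 / 2 : ℂ)) / 2) := by
  have hnorm : ‖(1 - (1 - 4 * u) ^ (1 / 2 : ℂ)) / 2‖ ≤ 2 * ‖u‖ := by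
    have := Complex.norm_cpow_one_div_two_sub_one_le (1 - 4 * u)
    rw [norm_div, Complex.norm_two, ← norm_neg, neg_sub]
    simp only [sub_sub_cancel_left, norm_neg, norm_mul, Complex.norm_ofNat] at this
    linarith
  have hsum : (1 - (1 - 4 * u) ^ (1 / 2 : ℂ)) / 2 = ∑' j, (catalan j : ℂ) * u ^ (j + 1) := by
    apply eq_of_sq_sub_self_eq_of_norm_add_lt_one
    · rw [tsum_catalan_mul_pow_succ_sq hu]
      linear_combination (1 / 4 : ℂ) * Complex.cpow_one_div_two_mul_self (1 - 4 * u)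
    · linarith [norm_tsum_catalan_mul_pow_succ_le hu]
  rw [hsum]
  exact (summable_norm_catalan_mul_pow_succ hu).of_norm.hasSum

end CatalanGeneratingFunction

theorem HasSum.sum_antidiagonal {α A : Type*} [AddCommMonoid α] [TopologicalSpace α]
    [ContinuousAdd α] [RegularSpace α] [AddCommMonoid A] [HasAntidiagonal A]
    {F : A × A → α} {s : α} (h : HasSum F s) :
    HasSum (fun n => ∑ kl ∈ antidiagonal n, F kl) s := by
  have := (HasAntidiagonal.sigmaAntidiagonalEquivProd.hasSum_iff.2 h).sigma
    fun n => hasSum_fintype (fun kl : antidiagonal n => F kl)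
  simpa only [Finset.sum_coe_sort] using this

theorem Complex.hasSum_choose_mul_pow {z : ℂ} (hz : ‖z‖ < 1) (a : ℕ) :
    HasSum (fun m => ((a + m).choose a : ℂ) * z ^ m) (1 / (1 - z) ^ (a + 1)) := by
  have := (one_div_one_sub_pow_hasFPowerSeriesOnBall_zero a).hasSum
    (y := z) (by rwa [mem_eball_zero_iff, ← ofReal_norm, ENNReal.ofReal_lt_one])
  simpa only [FormalMultilinearSeries.ofScalars_apply_eq, smul_eq_mul, zero_add] using this

theorem hasFPowerSeriesOnBall_ofScalars_of_hasSum {f : ℂ → ℂ} {c : ℕ → ℂ} {r : ℝ≥0}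
    (hr : 0 < r) (h : ∀ z : ℂ, ‖z‖ < r → HasSum (fun n => c n * z ^ n) (f z)) :
    HasFPowerSeriesOnBall f (.ofScalars ℂ c) 0 r where
  r_le := by
    refine ENNReal.le_of_forall_nnreal_lt fun t ht => ?_
    have hterms := (h t (by simpa using ht)).summable.tendsto_atTop_zero.norm
    refine FormalMultilinearSeries.le_radius_of_tendsto _ (l := 0) ?_
    simpa [FormalMultilinearSeries.ofScalars_norm] using hterms
  r_pos := by simpa using hr
  hasSum {y} hy := by
    simpa only [FormalMultilinearSeries.ofScalars_apply_eq, smul_eq_mul, zero_add]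
      using h y (by simpa using hy)

/-- `rCoeff (κ²)` is the sequence `r_n`. Expanding `(√(1 - 4u) - 1) / 2 = -∑ Cⱼ u^(j+1)` at
`u = -c z / (1 - z)²` and `(1 - z)^(-(2j+2)) = ∑ₘ (2j+1+m choose 2j+1) zᵐ`, the pair `(j, m)`
contributes `rSummand c (j, m) * z^(j+1+m)`. -/
noncomputable def rSummand (c : ℂ) (jm : ℕ × ℕ) : ℂ :=
  (-1) ^ jm.1 * catalan jm.1 * c ^ (jm.1 + 1) * (2 * jm.1 + 1 + jm.2).choose (2 * jm.1 + 1)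

noncomputable def rCoeff (c : ℂ) : ℕ → ℂ
  | 0 => 0
  | n + 1 => ∑ jm ∈ antidiagonal n, rSummand c jm

section DoubleSeries

variable {c z : ℂ}

theorem norm_rSummand_mul_pow_le (hc : ‖c‖ ≤ 1) (j m : ℕ) :
    ‖rSummand c (j, m) * z ^ (j + 1 + m)‖
      ≤ 2 * ‖z‖ * (16 * ‖z‖) ^ j * (2 * ‖z‖) ^ m := by
  have hcat : (catalan j : ℝ) ≤ 4 ^ j := mod_cast catalan_le_four_pow j
  have hchoose : ((2 * j + 1 + m).choose (2 * j + 1) : ℝ) ≤ 2 ^ (2 * j + 1 + m) := by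
    exact_mod_cast Nat.choose_le_two_pow _ _
  have hcpow : ‖c‖ ^ (j + 1) ≤ 1 := pow_le_one₀ (norm_nonneg c) hc
  simp only [rSummand, norm_mul, norm_pow, norm_neg, norm_one, one_pow, one_mul,
    Complex.norm_natCast]
  calc (catalan j : ℝ) * ‖c‖ ^ (j + 1) * ((2 * j + 1 + m).choose (2 * j + 1) : ℝ)
        * ‖z‖ ^ (j + 1 + m)
      ≤ 4 ^ j * 1 * 2 ^ (2 * j + 1 + m) * ‖z‖ ^ (j + 1 + m) := by gcongr
    _ = 2 * ‖z‖ * (16 * ‖z‖) ^ j * (2 * ‖z‖) ^ m := by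
        rw [mul_pow 16, show (16 : ℝ) ^ j = 4 ^ j * 4 ^ j by rw [← mul_pow]; norm_num,
          show (2 : ℝ) ^ (2 * j + 1 + m) = 4 ^ j * 2 * 2 ^ m by
            rw [pow_add, pow_add, pow_mul]; norm_num]
        ring

theorem summable_rSummand_mul_pow (hc : ‖c‖ ≤ 1) (hz : ‖z‖ < 1 / 16) :
    Summable fun jm : ℕ × ℕ => rSummand c jm * z ^ (jm.1 + 1 + jm.2) := by
  have hgeom := Summable.mul_of_nonneg (f := fun j : ℕ => 2 * ‖z‖ * (16 * ‖z‖) ^ j)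
    (g := fun m : ℕ => (2 * ‖z‖) ^ m)
    ((summable_geometric_of_lt_one (by positivity) (by linarith)).mul_left _)
    (summable_geometric_of_lt_one (by positivity) (by linarith))
    (fun j => by positivity) (fun m => by positivity)
  exact hgeom.of_norm_bounded fun jm => norm_rSummand_mul_pow_le hc jm.1 jm.2

theorem hasSum_rSummand_mul_pow_fiber (hz : ‖z‖ < 1) (j : ℕ) :
    HasSum (fun m => rSummand c (j, m) * z ^ (j + 1 + m))
      (-((catalan j : ℂ) * (-(c * z / (1 - z) ^ 2)) ^ (j + 1))) := by
  set a : ℂ := (-1) ^ j * catalan j * c ^ (j + 1) * z ^ (j + 1)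
  have hterm : ∀ m, rSummand c (j, m) * z ^ (j + 1 + m)
      = a * (((2 * j + 1 + m).choose (2 * j + 1) : ℂ) * z ^ m) := by
    intro m
    rw [rSummand, pow_add z (j + 1)]
    ring
  have hval : a * (1 / (1 - z) ^ (2 * j + 1 + 1))
      = -((catalan j : ℂ) * (-(c * z / (1 - z) ^ 2)) ^ (j + 1)) := by
    rw [neg_pow, div_pow, mul_pow, ← pow_mul]
    generalize 1 - z = w
    ring
  simp only [hterm, ← hval]
  exact (Complex.hasSum_choose_mul_pow hz (2 * j + 1)).mul_left a

theorem sum_antidiagonal_rSummand_mul_pow (n : ℕ) :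
    ∑ jm ∈ antidiagonal n, rSummand c jm * z ^ (jm.1 + 1 + jm.2)
      = rCoeff c (n + 1) * z ^ (n + 1) := by
  rw [rCoeff, sum_mul]
  refine sum_congr rfl fun jm hjm => ?_
  rw [← mem_antidiagonal.1 hjm, add_right_comm]

theorem hasSum_rCoeff_mul_pow (hc : ‖c‖ ≤ 1) (hz : ‖z‖ < 1 / 16) :
    HasSum (fun n => rCoeff c n * z ^ n)
      ((1 / 2) * ((1 + 4 * c * z / (1 - z) ^ 2) ^ ((1 : ℂ) / 2) - 1)) := by
  set u := -(c * z / (1 - z) ^ 2) with hu_def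
  have hu : ‖u‖ ≤ 1 / 8 := by
    have h1z : 15 / 16 ≤ ‖1 - z‖ := by
      linarith [norm_sub_norm_le (1 : ℂ) z, norm_one (α := ℂ)]
    have hcz : ‖c‖ * ‖z‖ ≤ 1 / 16 := by nlinarith [norm_nonneg c, norm_nonneg z]
    rw [hu_def, norm_neg, norm_div, norm_mul, norm_pow, div_le_iff₀ (by positivity)]
    nlinarith
  have hF := (summable_rSummand_mul_pow hc hz).hasSum
  have hval : ∑' jm : ℕ × ℕ, rSummand c jm * z ^ (jm.1 + 1 + jm.2)
      = (1 / 2) * ((1 + 4 * c * z / (1 - z) ^ 2) ^ ((1 : ℂ) / 2) - 1) := by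
    refine (hF.prod_fiberwise (hasSum_rSummand_mul_pow_fiber (by linarith))).unique ?_
    rw [show 1 + 4 * c * z / (1 - z) ^ 2 = 1 - 4 * u by rw [hu_def]; ring,
      show ∀ x : ℂ, 1 / 2 * (x - 1) = -((1 - x) / 2) by intro x; ring]
    exact (hasSum_catalan_mul_pow_succ hu).neg
  rw [← hval, ← hasSum_nat_add_iff' 1]
  simpa [sum_antidiagonal_rSummand_mul_pow, rCoeff] using hF.sum_antidiagonal

end DoubleSeries

theorem rCoeff_ofReal_sq_succ (κ : ℝ) (m : ℕ) :
    rCoeff ((κ : ℂ) ^ 2) (m + 1)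
      = ((κ * ∫ s in (0 : ℝ)..κ, jacobiP10 m (s ^ 2) : ℝ) : ℂ) := by
  rw [mul_integral_jacobiP10_sq, rCoeff, Nat.sum_antidiagonal_eq_sum_range_succ_mk]
  push_cast
  refine sum_congr rfl fun k hk => ?_
  rw [rSummand, show 2 * k + 1 + (m - k) = m + k + 1 by have := mem_range.1 hk; omega]
  ring

theorem stmt8 (κ : ℝ) (hκ : κ ∈ Set.Ioc (-1 : ℝ) 1)
    (p : FormalMultilinearSeries ℂ ℂ ℂ)
    (hp : HasFPowerSeriesAt
      (fun z : ℂ => (1 / 2) * ((1 + 4 * (κ : ℂ) ^ 2 * z / (1 - z) ^ 2) ^ ((1 : ℂ) / 2) - 1))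
      p 0)
    (n : ℕ) (hn : 1 ≤ n) :
    p.coeff n = ((κ * ∫ s in (0 : ℝ)..κ, jacobiP10 (n - 1) (s ^ 2) : ℝ) : ℂ) := by
  have hc : ‖(κ : ℂ) ^ 2‖ ≤ 1 := by
    rw [norm_pow, Complex.norm_real, Real.norm_eq_abs, sq_abs]
    nlinarith [hκ.1, hκ.2]
  have hr : HasFPowerSeriesAt _ (.ofScalars ℂ (rCoeff ((κ : ℂ) ^ 2))) 0 :=
    (hasFPowerSeriesOnBall_ofScalars_of_hasSum (r := 1 / 16) (by norm_num)
      fun z hz => hasSum_rCoeff_mul_pow hc (by simpa using hz)).hasFPowerSeriesAt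
  obtain ⟨m, rfl⟩ : ∃ m, n = m + 1 := ⟨n - 1, by omega⟩
  rw [hp.eq_formalMultilinearSeries hr, FormalMultilinearSeries.coeff_ofScalars,
    Nat.add_sub_cancel, rCoeff_ofReal_sq_succ]
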